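/- arXiv:cs/0609076 — 3 statements merged into one kernel-verified Lean document; each statement's English description precedes it below -/
import Mathlib

section
/- For all integers n ≥ 1 and 1 ≤ j ≤ n, the sum over all non-ascending tuples (c₁,…,c_j) of positive integers with c₁ + ⋯ + c_j = n of n(n-1)⋯(n-j+2)/f(c₁,…,c_j) equals (1/n)·C(n,j)·C(n,j-1), where f(c₁,…,c_j) = ∏_{k≥1} n_k! and n_k is the number of indices r with c_r = k. -/
open scoped Classical

/-- `f(c₁,…,c_j) = ∏_{k ≥ 1} n_k!` where `n_k` is the multiplicity of `k`. -/
def fMult (m : Multiset ℕ) : ℕ := m.toFinset.prod fun k => (m.count k).factorial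

/-!
`Perm (Fin j)` acts on the positive compositions of `n` into `j` parts, and sorting in
non-ascending order picks exactly one representative `c` from each orbit. The stabiliser of `c`
is the product of the symmetric groups of its fibres, of order `f(c)`, so the orbit of `c` has
`j! / f(c)` elements. Summing, `∑_c j! / f(c)` is the number `C(n-1, j-1)` of compositions, and
`n(n-1)⋯(n-j+2) / j! · C(n-1, j-1) = C(n,j) C(n,j-1) / n`.
-/

open Finset Equiv

section PermOrbit

variable {ι α : Type*} [Fintype ι]

noncomputable def permOrbit (c : ι → α) : Finset (ι → α) := univ.image fun σ : Perm ι => c ∘ σ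

lemma mem_permOrbit {c d : ι → α} : d ∈ permOrbit c ↔ ∃ σ : Perm ι, c ∘ σ = d := by
  simp [permOrbit]

lemma card_permOrbit_mul_card_stabilizer (c : ι → α) :
    #(permOrbit c) * #{σ : Perm ι | c ∘ σ = c} = (Fintype.card ι).factorial := by
  rw [← Fintype.card_perm, ← card_univ,
    card_eq_sum_card_image (fun σ : Perm ι => c ∘ σ) univ, permOrbit]
  refine (sum_const_nat fun d hd => ?_).symm
  obtain ⟨τ, -, rfl⟩ := mem_image.mp hd
  refine card_nbij' (· * τ⁻¹) (· * τ) (fun σ hσ => ?_) (fun σ hσ => ?_) (fun σ _ => by simp)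
    (fun σ _ => by simp)
  · simp only [coe_filter, Set.mem_ofPred_eq, mem_univ, true_and] at hσ ⊢
    rw [Perm.coe_mul, ← Function.comp_assoc, hσ, Function.comp_assoc, ← Perm.coe_mul,
      mul_inv_cancel, Perm.coe_one, Function.comp_id]
  · simp only [coe_filter, Set.mem_ofPred_eq, mem_univ, true_and] at hσ ⊢
    rw [Perm.coe_mul, ← Function.comp_assoc, hσ]

lemma fMult_map_eq_card_stabilizer (c : ι → ℕ) :
    fMult (Multiset.map c univ.val) = #{σ : Perm ι | c ∘ σ = c} := by
  rw [← Fintype.card_subtype, DomMulAct.stabilizer_card', fMult, Multiset.toFinset_map,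
    val_toFinset]
  refine prod_congr rfl fun k _ => ?_
  rw [Multiset.count_map, Fintype.card_subtype, card_def, filter_val]
  simp_rw [eq_comm]

lemma card_permOrbit_mul_fMult (c : ι → ℕ) :
    #(permOrbit c) * fMult (Multiset.map c univ.val) = (Fintype.card ι).factorial := by
  rw [fMult_map_eq_card_stabilizer]
  convert card_permOrbit_mul_card_stabilizer c

end PermOrbit

section SortDesc

variable {n : ℕ} {α : Type*} [LinearOrder α]

noncomputable def sortDesc (f : Fin n → α) : Perm (Fin n) := Fin.revPerm.trans (Tuple.sort f)

lemma antitone_comp_sortDesc (f : Fin n → α) : Antitone (f ∘ sortDesc f) :=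
  fun _ _ h => Tuple.monotone_sort f (Fin.rev_le_rev.mpr h)

lemma comp_sortDesc_eq_iff_mem_permOrbit {c d : Fin n → α} (hc : Antitone c) :
    d ∘ sortDesc d = c ↔ d ∈ permOrbit c := by
  rw [mem_permOrbit]
  constructor
  · intro h
    refine ⟨(sortDesc d).symm, ?_⟩
    rw [← h, Function.comp_assoc, Equiv.self_comp_symm, Function.comp_id]
  · rintro ⟨σ, rfl⟩
    simpa [Function.comp_assoc] using Tuple.unique_antitone (f := c)
      (σ := σ * sortDesc (c ∘ σ)) (τ := 1) (antitone_comp_sortDesc (c ∘ σ)) hc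

lemma sum_card_permOrbit_filter_antitone (S : Finset (Fin n → α))
    (hS : ∀ d ∈ S, ∀ σ : Perm (Fin n), d ∘ σ ∈ S) :
    ∑ c ∈ S with Antitone c, #(permOrbit c) = #S := by
  refine ((card_eq_sum_card_fiberwise (f := fun d : Fin n → α => d ∘ sortDesc d)
    fun d hd => ?_).trans (sum_congr rfl fun c hc => congrArg card ?_)).symm
  · exact mem_filter.mpr ⟨hS d hd _, antitone_comp_sortDesc d⟩
  · ext d
    rw [mem_filter, comp_sortDesc_eq_iff_mem_permOrbit (mem_filter.mp hc).2]
    constructor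
    · exact And.right
    · intro hd
      obtain ⟨σ, rfl⟩ := mem_permOrbit.mp hd
      exact ⟨hS c (mem_filter.mp hc).1 σ, hd⟩

end SortDesc

section Compositions

lemma card_antidiagonalTuple (k m : ℕ) : #(Nat.antidiagonalTuple k m) = (k + m - 1).choose m := by
  rw [← Fintype.card_coe, Fintype.card_congr ((Equiv.subtypeEquivRight
      fun _ => Nat.mem_antidiagonalTuple).trans (Sym.equivNatSumOfFintype (Fin k) m).symm),
    Sym.card_sym_eq_choose, Fintype.card_fin]

lemma card_filter_pos_antidiagonalTuple {k m : ℕ} (hk : 1 ≤ k) (hkm : k ≤ m) :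
    #{d ∈ Nat.antidiagonalTuple k m | ∀ r, 1 ≤ d r} = (m - 1).choose (k - 1) := by
  have hshift : #{d ∈ Nat.antidiagonalTuple k m | ∀ r, 1 ≤ d r} =
      #(Nat.antidiagonalTuple k (m - k)) := by
    refine card_nbij' (· - 1) (· + 1) (fun d hd => ?_) (fun d hd => ?_) (fun d hd => ?_)
      (fun d _ => by ext; simp)
    · simp only [coe_filter, Set.mem_ofPred_eq, Nat.mem_antidiagonalTuple, mem_coe] at hd ⊢
      simp only [Pi.sub_apply, Pi.one_apply]
      rw [sum_tsub_distrib _ fun i _ => hd.2 i, hd.1]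
      simp
    · simp only [coe_filter, Set.mem_ofPred_eq, Nat.mem_antidiagonalTuple, mem_coe] at hd ⊢
      simp only [Pi.add_apply, Pi.one_apply, sum_add_distrib, hd, sum_const, card_univ,
        Fintype.card_fin, smul_eq_mul, mul_one, le_add_iff_nonneg_left, zero_le, implies_true,
        and_true]
      omega
    · simp only [coe_filter, Set.mem_ofPred_eq, Nat.mem_antidiagonalTuple] at hd
      ext i
      simp [Nat.sub_add_cancel (hd.2 i)]
  rw [hshift, card_antidiagonalTuple, show k + (m - k) - 1 = m - 1 by omega,
    show m - k = (m - 1) - (k - 1) by omega, Nat.choose_symm (by omega)]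

lemma comp_perm_mem_filter_pos_antidiagonalTuple {k m : ℕ} {d : Fin k → ℕ}
    (hd : d ∈ {d ∈ Nat.antidiagonalTuple k m | ∀ r, 1 ≤ d r}) (σ : Perm (Fin k)) :
    d ∘ σ ∈ {d ∈ Nat.antidiagonalTuple k m | ∀ r, 1 ≤ d r} := by
  simp only [mem_filter, Nat.mem_antidiagonalTuple] at hd ⊢
  exact ⟨(Equiv.sum_comp σ d).trans hd.1, fun r => hd.2 (σ r)⟩

end Compositions

lemma descFactorial_div_factorial_mul_choose {n j : ℕ} (hn : 1 ≤ n) (hj : 1 ≤ j) :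
    (n.descFactorial (j - 1) : ℚ) / j.factorial * (n - 1).choose (j - 1) =
      1 / n * n.choose j * n.choose (j - 1) := by
  obtain ⟨n, rfl⟩ := Nat.exists_eq_add_of_le' hn
  obtain ⟨j, rfl⟩ := Nat.exists_eq_add_of_le' hj
  have hpascal : ((n + 1 : ℕ) : ℚ) * n.choose j = (n + 1).choose (j + 1) * (j + 1) := by
    exact_mod_cast Nat.add_one_mul_choose_eq n j
  rw [Nat.add_sub_cancel, Nat.add_sub_cancel, Nat.descFactorial_eq_factorial_mul_choose,
    Nat.factorial_succ]
  push_cast at hpascal ⊢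
  field_simp
  linear_combination ((n + 1).choose j : ℚ) * hpascal

/-- Summing `n(n-1)⋯(n-j+2)/f(c₁,…,c_j)` over all non-ascending tuples
`(c₁,…,c_j)` of positive integers with `c₁+⋯+c_j = n` gives the Narayana
number `(1/n) C(n,j) C(n,j-1)`. -/
theorem narayana_as_sum_over_types (n j : ℕ) (hn : 1 ≤ n) (hj : 1 ≤ j) (hjn : j ≤ n) :
    ∑ c ∈ (Finset.Nat.antidiagonalTuple j n).filter
        (fun c => (∀ r s : Fin j, r ≤ s → c s ≤ c r) ∧ ∀ r, 1 ≤ c r),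
      (Nat.descFactorial n (j - 1) : ℚ) / (fMult (Multiset.map c Finset.univ.val) : ℚ) =
    (1 / n : ℚ) * (n.choose j : ℚ) * (n.choose (j - 1) : ℚ) := by
  set S := {d ∈ Nat.antidiagonalTuple j n | ∀ r, 1 ≤ d r}
  have hT : (Nat.antidiagonalTuple j n).filter
      (fun c => (∀ r s : Fin j, r ≤ s → c s ≤ c r) ∧ ∀ r, 1 ≤ c r) = {c ∈ S | Antitone c} := by
    rw [filter_filter]
    exact filter_congr fun c _ => and_comm
  have hterm (c : Fin j → ℕ) : (n.descFactorial (j - 1) : ℚ) / fMult (Multiset.map c univ.val)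
      = n.descFactorial (j - 1) / j.factorial * #(permOrbit c) := by
    have h := card_permOrbit_mul_fMult c
    rw [Fintype.card_fin] at h
    obtain ⟨ho, hf⟩ := mul_ne_zero_iff.mp (h ▸ Nat.factorial_ne_zero j)
    rw [← h]
    push_cast
    field_simp
  calc _ = ∑ c ∈ S with Antitone c,
        (n.descFactorial (j - 1) : ℚ) / j.factorial * #(permOrbit c) := by
        rw [hT]
        exact sum_congr rfl fun c _ => hterm c
    _ = (n.descFactorial (j - 1) : ℚ) / j.factorial * #S := by
        rw [← mul_sum, ← Nat.cast_sum, sum_card_permOrbit_filter_antitone S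
          fun d hd => comp_perm_mem_filter_pos_antidiagonalTuple hd]
    _ = _ := by
        rw [card_filter_pos_antidiagonalTuple hj hjn, descFactorial_div_factorial_mul_choose hn hj]
end

section
/- If a noncrossing partition π of an n-element totally ordered set has j classes, then its Kreweras complementation map KC(π) has exactly n - j + 1 classes. -/
/-- A partition of the totally ordered set `Fin n` is noncrossing. -/
def IsNoncrossing {n : ℕ} (P : Finpartition (Finset.univ : Finset (Fin n))) : Prop :=
  ¬ ∃ p₁ q₁ p₂ q₂ : Fin n, p₁ < q₁ ∧ q₁ < p₂ ∧ p₂ < q₂ ∧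
      ∃ B ∈ P.parts, ∃ C ∈ P.parts, B ≠ C ∧ p₁ ∈ B ∧ p₂ ∈ B ∧ q₁ ∈ C ∧ q₂ ∈ C

/-- Halve an index of the interlaced set `1,1̄,2,2̄,…,n,n̄` (element `i` of the original
copy sits at position `2i`, element `ī` of the barred copy at position `2i+1`). -/
def half {n : ℕ} (x : Fin (2 * n)) : Fin n := ⟨x.val / 2, by omega⟩

/-- `x` and `y` of the interlaced set lie in the same class of the union partition
`π ∪ σ`, where `π` partitions the original copy (even positions) and `σ` the barred
copy (odd positions). -/
def togetherIn {n : ℕ} (π σ : Finpartition (Finset.univ : Finset (Fin n)))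
    (x y : Fin (2 * n)) : Prop :=
  (x.val % 2 = 0 ∧ y.val % 2 = 0 ∧ ∃ B ∈ π.parts, half x ∈ B ∧ half y ∈ B) ∨
  (x.val % 2 = 1 ∧ y.val % 2 = 1 ∧ ∃ B ∈ σ.parts, half x ∈ B ∧ half y ∈ B)

/-- The union `π ∪ σ` is a noncrossing partition of the interlaced `2n`-element set
`1,1̄,2,2̄,…,n,n̄`. -/
def InterlacedNoncrossing {n : ℕ}
    (π σ : Finpartition (Finset.univ : Finset (Fin n))) : Prop :=
  ¬ ∃ p₁ q₁ p₂ q₂ : Fin (2 * n), p₁ < q₁ ∧ q₁ < p₂ ∧ p₂ < q₂ ∧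
      togetherIn π σ p₁ p₂ ∧ togetherIn π σ q₁ q₂ ∧ ¬ togetherIn π σ p₁ q₁

/-- `σ'` refines `σ`: every class of `σ'` is contained in a class of `σ`. -/
def Refines {n : ℕ} (σ' σ : Finpartition (Finset.univ : Finset (Fin n))) : Prop :=
  ∀ B ∈ σ'.parts, ∃ C ∈ σ.parts, B ⊆ C

/-!
Let `τ` be the partition of the barred copy in which `ū ~ v̄` iff no block of `π` has
elements both between `ū` and `v̄` and outside them. If `π ∪ σ` is noncrossing, a block of `π`
that entered the region between two elements of a `σ`-block and also left it would cross that
block, so `σ` refines `τ`; and `π ∪ τ` is itself noncrossing, so the maximal `σ` is `τ`.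

Count the blocks of `τ` by their largest elements. `n̄` is one of them, and for `u < n` the
element `ū` is largest in its `τ`-block iff `u + 1` is not the smallest element of its
`π`-block: a smaller `p` in that block separates `ū` from every later `v̄`, while if
`u + 1 = min B` then `ū ~ v̄` for `v = max B`, because by noncrossing the span
`[min B, max B]` is a union of blocks of `π`. Since `n - |π|` elements are not the smallest of their block,
`τ` has `n - |π| + 1` blocks.
-/

open Finset

namespace Finpartition

variable {α : Type*} [LinearOrder α] [Fintype α]

theorem mem_part_iff_part_eq (P : Finpartition (univ : Finset α)) {a b : α} :
    b ∈ P.part a ↔ P.part b = P.part a :=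
  P.mem_part_iff_part_eq_part (mem_univ b) (mem_univ a)

theorem exists_mem_parts_and_mem_iff (P : Finpartition (univ : Finset α)) {a b : α} :
    (∃ B ∈ P.parts, a ∈ B ∧ b ∈ B) ↔ P.part a = P.part b := by
  rw [← mem_part_iff_exists, mem_part_iff_part_eq]

theorem le_of_forall_part_eq_part {P Q : Finpartition (univ : Finset α)}
    (h : ∀ a b, P.part a = P.part b → Q.part a = Q.part b) : P ≤ Q := by
  intro B hB
  obtain ⟨a, ha⟩ := P.nonempty_of_mem_parts hB
  refine ⟨Q.part a, Q.part_mem.2 (mem_univ a), fun b hb => ?_⟩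
  rw [mem_part_iff_part_eq]
  exact h b a ((P.part_eq_of_mem hB hb).trans (P.part_eq_of_mem hB ha).symm)

theorem isGreatest_part_iff (P : Finpartition (univ : Finset α)) {a : α} :
    IsGreatest (P.part a : Set α) a ↔ ∀ b ∈ P.part a, b ≤ a :=
  and_iff_right (P.mem_part (mem_univ a))

theorem isLeast_part_iff (P : Finpartition (univ : Finset α)) {a : α} :
    IsLeast (P.part a : Set α) a ↔ ∀ b ∈ P.part a, a ≤ b :=
  and_iff_right (P.mem_part (mem_univ a))

open scoped Classical in
theorem card_parts_eq_card_filter_isGreatest (P : Finpartition (univ : Finset α)) :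
    #P.parts = #{a | IsGreatest (P.part a : Set α) a} := by
  refine card_bij (fun B hB => B.max' (P.nonempty_of_mem_parts hB)) (fun B hB => ?_)
    (fun B hB C hC h => ?_) (fun a ha => ?_)
  · rw [mem_filter, P.part_eq_of_mem hB (max'_mem _ _)]
    exact ⟨mem_univ _, isGreatest_max' _ _⟩
  · exact P.eq_of_mem_parts hB hC (max'_mem _ _) (by rw [h]; exact max'_mem _ _)
  · exact ⟨P.part a, P.part_mem.2 (mem_univ a),
      ((mem_filter.1 ha).2.unique (isGreatest_max' _ _)).symm⟩

open scoped Classical in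
theorem card_parts_eq_card_filter_isLeast (P : Finpartition (univ : Finset α)) :
    #P.parts = #{a | IsLeast (P.part a : Set α) a} := by
  refine card_bij (fun B hB => B.min' (P.nonempty_of_mem_parts hB)) (fun B hB => ?_)
    (fun B hB C hC h => ?_) (fun a ha => ?_)
  · rw [mem_filter, P.part_eq_of_mem hB (min'_mem _ _)]
    exact ⟨mem_univ _, isLeast_min' _ _⟩
  · exact P.eq_of_mem_parts hB hC (min'_mem _ _) (by rw [h]; exact min'_mem _ _)
  · exact ⟨P.part a, P.part_mem.2 (mem_univ a),
      ((mem_filter.1 ha).2.unique (isLeast_min' _ _)).symm⟩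

end Finpartition

open Finpartition

variable {n : ℕ}

theorem isNoncrossing_iff {P : Finpartition (univ : Finset (Fin n))} :
    IsNoncrossing P ↔ ∀ ⦃a b c d : Fin n⦄, a < b → b < c → c < d →
      P.part a = P.part c → P.part b = P.part d → P.part a = P.part b := by
  constructor
  · intro hP a b c d hab hbc hcd hac hbd
    by_contra hne
    exact hP ⟨a, b, c, d, hab, hbc, hcd, P.part a, P.part_mem.2 (mem_univ a), P.part b,
      P.part_mem.2 (mem_univ b), hne, P.mem_part (mem_univ a), P.mem_part_iff_part_eq.2 hac.symm,
      P.mem_part (mem_univ b), P.mem_part_iff_part_eq.2 hbd.symm⟩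
  · rintro h ⟨a, b, c, d, hab, hbc, hcd, B, hB, C, hC, hBC, ha, hc, hb, hd⟩
    rw [← P.part_eq_of_mem hB ha, ← P.part_eq_of_mem hC hb] at hBC
    exact hBC (h hab hbc hcd ((P.part_eq_of_mem hB ha).trans (P.part_eq_of_mem hB hc).symm)
      ((P.part_eq_of_mem hC hb).trans (P.part_eq_of_mem hC hd).symm))

theorem IsNoncrossing.mem_Icc_of_part_eq {P : Finpartition (univ : Finset (Fin n))}
    (hP : IsNoncrossing P) {w v p q : Fin n} (hw : IsLeast (P.part w : Set (Fin n)) w)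
    (hv : IsGreatest (P.part w : Set (Fin n)) v) (hpq : P.part p = P.part q)
    (hp : p ∈ Set.Icc w v) : q ∈ Set.Icc w v := by
  by_cases hpw : P.part p = P.part w
  · have hq : q ∈ P.part w := P.mem_part_iff_part_eq.2 (hpq.symm.trans hpw)
    exact ⟨hw.2 hq, hv.2 hq⟩
  have hvw : P.part v = P.part w := P.mem_part_iff_part_eq.1 hv.1
  have hwp : w < p := hp.1.lt_of_ne (by rintro rfl; exact hpw rfl)
  have hpv : p < v := hp.2.lt_of_ne (by rintro rfl; exact hpw hvw)
  by_contra hq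
  rcases not_and_or.1 hq with hqw | hvq
  · exact hpw (hpq.trans (isNoncrossing_iff.1 hP (not_le.1 hqw) hwp hpv hpq.symm hvw.symm))
  · exact hpw (isNoncrossing_iff.1 hP hwp hpv (not_le.1 hvq) hvw.symm hpq).symm

/-- `ū` and `v̄` lie in one block of the Kreweras complement iff no block of `π` has
elements both between them and outside; `p ≤ u ↔ p ≤ v` says that `p` is not between `ū`
and `v̄`, and the iff-of-iffs form makes the relation an equivalence by pure logic. -/
def KrewerasRel (π : Finpartition (univ : Finset (Fin n))) (u v : Fin n) : Prop :=
  ∀ ⦃p q⦄, π.part p = π.part q → ((p ≤ u ↔ p ≤ v) ↔ (q ≤ u ↔ q ≤ v))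

def krewerasSetoid (π : Finpartition (univ : Finset (Fin n))) : Setoid (Fin n) where
  r := KrewerasRel π
  iseqv :=
    { refl := fun _ _ _ _ => iff_of_true Iff.rfl Iff.rfl
      symm := fun h _ _ hpq => by have := h hpq; tauto
      trans := fun h₁ h₂ _ _ hpq => by have := h₁ hpq; have := h₂ hpq; tauto }

open scoped Classical in
noncomputable def kreweras (π : Finpartition (univ : Finset (Fin n))) :
    Finpartition (univ : Finset (Fin n)) :=
  ofSetoid (krewerasSetoid π)

open scoped Classical in
theorem mem_kreweras_part {π : Finpartition (univ : Finset (Fin n))} {u v : Fin n} :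
    v ∈ (kreweras π).part u ↔ KrewerasRel π u v :=
  mem_part_ofSetoid_iff_rel

theorem kreweras_part_eq_part_iff {π : Finpartition (univ : Finset (Fin n))} {u v : Fin n} :
    (kreweras π).part u = (kreweras π).part v ↔ KrewerasRel π u v := by
  rw [← mem_part_iff_part_eq, mem_kreweras_part]
  exact ⟨(krewerasSetoid π).symm, (krewerasSetoid π).symm⟩

theorem isNoncrossing_kreweras (π : Finpartition (univ : Finset (Fin n))) :
    IsNoncrossing (kreweras π) := by
  refine isNoncrossing_iff.2 fun a b c d hab hbc hcd hac hbd => ?_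
  refine kreweras_part_eq_part_iff.2 fun p q hpq => ?_
  have hac := kreweras_part_eq_part_iff.1 hac hpq
  have hbd := kreweras_part_eq_part_iff.1 hbd hpq
  simp only [Fin.le_def, Fin.lt_def] at *
  omega

def evenPos (a : Fin n) : Fin (2 * n) := ⟨2 * a, by omega⟩

def oddPos (a : Fin n) : Fin (2 * n) := ⟨2 * a + 1, by omega⟩

theorem evenPos_or_oddPos (x : Fin (2 * n)) : (∃ a, evenPos a = x) ∨ ∃ a, oddPos a = x := by
  obtain ⟨k, hk | hk⟩ := Nat.even_or_odd' x
  · exact Or.inl ⟨⟨k, by omega⟩, Fin.ext hk.symm⟩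
  · exact Or.inr ⟨⟨k, by omega⟩, Fin.ext hk.symm⟩

@[simp] theorem evenPos_lt_evenPos {a b : Fin n} : evenPos a < evenPos b ↔ a < b := by
  simp only [evenPos, Fin.lt_def]; omega

@[simp] theorem evenPos_lt_oddPos {a b : Fin n} : evenPos a < oddPos b ↔ a ≤ b := by
  simp only [evenPos, oddPos, Fin.lt_def, Fin.le_def]; omega

@[simp] theorem oddPos_lt_evenPos {a b : Fin n} : oddPos a < evenPos b ↔ a < b := by
  simp only [evenPos, oddPos, Fin.lt_def]; omega

@[simp] theorem oddPos_lt_oddPos {a b : Fin n} : oddPos a < oddPos b ↔ a < b := by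
  simp only [oddPos, Fin.lt_def]; omega

@[simp] theorem evenPos_val_mod_two (a : Fin n) : (evenPos a).val % 2 = 0 := by
  simp [evenPos]

@[simp] theorem oddPos_val_mod_two (a : Fin n) : (oddPos a).val % 2 = 1 := by
  simp [oddPos]

@[simp] theorem half_evenPos (a : Fin n) : half (evenPos a) = a :=
  Fin.ext (by simp [half, evenPos])

@[simp] theorem half_oddPos (a : Fin n) : half (oddPos a) = a :=
  Fin.ext (by simp only [half, oddPos]; omega)

section Interlaced

variable {π σ : Finpartition (univ : Finset (Fin n))} {a b : Fin n}

@[simp] theorem togetherIn_evenPos_evenPos :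
    togetherIn π σ (evenPos a) (evenPos b) ↔ π.part a = π.part b := by
  simp [togetherIn, exists_mem_parts_and_mem_iff]

@[simp] theorem togetherIn_oddPos_oddPos :
    togetherIn π σ (oddPos a) (oddPos b) ↔ σ.part a = σ.part b := by
  simp [togetherIn, exists_mem_parts_and_mem_iff]

@[simp] theorem not_togetherIn_evenPos_oddPos : ¬togetherIn π σ (evenPos a) (oddPos b) := by
  simp [togetherIn]

@[simp] theorem not_togetherIn_oddPos_evenPos : ¬togetherIn π σ (oddPos a) (evenPos b) := by
  simp [togetherIn]

theorem interlacedNoncrossing_iff :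
    InterlacedNoncrossing π σ ↔ IsNoncrossing π ∧ IsNoncrossing σ ∧
      (∀ ⦃a b c d⦄, a ≤ b → b < c → c ≤ d → π.part a = π.part c → σ.part b ≠ σ.part d) ∧
      (∀ ⦃a b c d⦄, a < b → b ≤ c → c < d → σ.part a = σ.part c → π.part b ≠ π.part d) := by
  constructor
  · intro h
    refine ⟨isNoncrossing_iff.2 fun a b c d hab hbc hcd hac hbd => ?_,
      isNoncrossing_iff.2 fun a b c d hab hbc hcd hac hbd => ?_,
      fun a b c d hab hbc hcd hac hbd => ?_, fun a b c d hab hbc hcd hac hbd => ?_⟩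
    · by_contra hne
      exact h ⟨evenPos a, evenPos b, evenPos c, evenPos d, by simpa, by simpa, by simpa,
        by simpa, by simpa, by simpa⟩
    · by_contra hne
      exact h ⟨oddPos a, oddPos b, oddPos c, oddPos d, by simpa, by simpa, by simpa,
        by simpa, by simpa, by simpa⟩
    · exact h ⟨evenPos a, oddPos b, evenPos c, oddPos d, by simpa, by simpa, by simpa,
        by simpa, by simpa, by simp⟩
    · exact h ⟨oddPos a, evenPos b, oddPos c, evenPos d, by simpa, by simpa, by simpa,
        by simpa, by simpa, by simp⟩
  · rintro ⟨hπ, hσ, hπσ, hσπ⟩ ⟨x₁, y₁, x₂, y₂, h₁, h₂, h₃, hx, hy, hxy⟩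
    -- mixed-parity pairs are never together, which leaves four cases
    rcases evenPos_or_oddPos x₁ with ⟨a, rfl⟩ | ⟨a, rfl⟩ <;>
    rcases evenPos_or_oddPos y₁ with ⟨b, rfl⟩ | ⟨b, rfl⟩ <;>
    rcases evenPos_or_oddPos x₂ with ⟨c, rfl⟩ | ⟨c, rfl⟩ <;>
    rcases evenPos_or_oddPos y₂ with ⟨d, rfl⟩ | ⟨d, rfl⟩ <;>
    simp only [togetherIn_evenPos_evenPos, togetherIn_oddPos_oddPos,
      not_togetherIn_evenPos_oddPos, not_togetherIn_oddPos_evenPos, evenPos_lt_evenPos,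
      evenPos_lt_oddPos, oddPos_lt_evenPos, oddPos_lt_oddPos] at h₁ h₂ h₃ hx hy hxy
    · exact hxy (isNoncrossing_iff.1 hπ h₁ h₂ h₃ hx hy)
    · exact hπσ h₁ h₂ h₃ hx hy
    · exact hσπ h₁ h₂ h₃ hx hy
    · exact hxy (isNoncrossing_iff.1 hσ h₁ h₂ h₃ hx hy)

end Interlaced

theorem IsNoncrossing.interlacedNoncrossing_kreweras {π : Finpartition (univ : Finset (Fin n))}
    (hπ : IsNoncrossing π) : InterlacedNoncrossing π (kreweras π) := by
  refine interlacedNoncrossing_iff.2 ⟨hπ, isNoncrossing_kreweras π,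
    fun a b c d hab hbc hcd hac hbd => ?_, fun a b c d hab hbc hcd hac hbd => ?_⟩
  · have := kreweras_part_eq_part_iff.1 hbd hac
    simp only [Fin.le_def, Fin.lt_def] at *
    omega
  · have := kreweras_part_eq_part_iff.1 hac hbd
    simp only [Fin.le_def, Fin.lt_def] at *
    omega

theorem InterlacedNoncrossing.le_kreweras {π σ : Finpartition (univ : Finset (Fin n))}
    (h : InterlacedNoncrossing π σ) : σ ≤ kreweras π := by
  obtain ⟨-, -, hπσ, hσπ⟩ := interlacedNoncrossing_iff.1 h
  have inside : ∀ ⦃a b p q⦄, σ.part a = σ.part b → π.part p = π.part q → a < q → q ≤ b →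
      a < p ∧ p ≤ b := fun a b p q hab hpq haq hqb =>
    ⟨lt_of_not_ge fun hpa => hπσ hpa haq hqb hpq hab,
      le_of_not_gt fun hbp => hσπ haq hqb hbp hab hpq.symm⟩
  refine le_of_forall_part_eq_part fun a b hab => kreweras_part_eq_part_iff.2 fun p q hpq => ?_
  have h₁ := @inside a b p q hab hpq
  have h₂ := @inside a b q p hab hpq.symm
  have h₃ := @inside b a p q hab.symm hpq
  have h₄ := @inside b a q p hab.symm hpq.symm
  simp only [Fin.le_def, Fin.lt_def] at *
  omega

section Counting

variable {m : ℕ} {π : Finpartition (univ : Finset (Fin (m + 1)))}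

theorem isGreatest_kreweras_part_last :
    IsGreatest ((kreweras π).part (Fin.last m) : Set (Fin (m + 1))) (Fin.last m) :=
  (isGreatest_part_iff _).2 fun b _ => Fin.le_last b

theorem IsNoncrossing.isGreatest_kreweras_part_castSucc_iff (hπ : IsNoncrossing π) (i : Fin m) :
    IsGreatest ((kreweras π).part i.castSucc : Set (Fin (m + 1))) i.castSucc ↔
      ¬IsLeast (π.part i.succ : Set (Fin (m + 1))) i.succ := by
  rw [isGreatest_part_iff, isLeast_part_iff]
  constructor
  · intro hG hL
    have hv := isGreatest_max' (π.part i.succ) ⟨_, π.mem_part (mem_univ i.succ)⟩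
    set v := (π.part i.succ).max' _
    refine (hG v (mem_kreweras_part.2 fun p q hpq => ?_)).not_gt
      (Fin.castSucc_lt_succ.trans_le (hv.2 (π.mem_part (mem_univ _))))
    have hp := hπ.mem_Icc_of_part_eq ((isLeast_part_iff π).2 hL) hv hpq
    have hq := hπ.mem_Icc_of_part_eq ((isLeast_part_iff π).2 hL) hv hpq.symm
    have hwv := hv.2 (π.mem_part (mem_univ i.succ))
    simp only [Fin.le_castSucc_iff, Set.mem_Icc] at *
    simp only [Fin.le_def, Fin.lt_def] at *
    omega
  · intro hL v hv
    obtain ⟨p, hp, hpi⟩ : ∃ p ∈ π.part i.succ, p < i.succ := by simpa using hL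
    have := mem_kreweras_part.1 hv (π.mem_part_iff_part_eq.1 hp)
    by_contra hvi
    simp only [Fin.le_castSucc_iff] at *
    simp only [Fin.le_def, Fin.lt_def, Fin.val_succ] at *
    omega

open scoped Classical in
theorem IsNoncrossing.card_kreweras_parts_add_card_parts (hπ : IsNoncrossing π) :
    #(kreweras π).parts + #π.parts = m + 2 := by
  have hτ : #(kreweras π).parts =
      #{i : Fin m | ¬IsLeast (π.part i.succ : Set (Fin (m + 1))) i.succ} + 1 := by
    rw [card_parts_eq_card_filter_isGreatest, card_filter, Fin.sum_univ_castSucc,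
      if_pos isGreatest_kreweras_part_last, card_filter]
    simp_rw [hπ.isGreatest_kreweras_part_castSucc_iff]
  have hnotLeast : #{a : Fin (m + 1) | ¬IsLeast (π.part a : Set (Fin (m + 1))) a} =
      #{i : Fin m | ¬IsLeast (π.part i.succ : Set (Fin (m + 1))) i.succ} := by
    have h0 : IsLeast (π.part 0 : Set (Fin (m + 1))) 0 :=
      (isLeast_part_iff π).2 fun b _ => Fin.zero_le b
    rw [Fin.card_filter_univ_succ', if_neg (not_not.2 h0), zero_add]
  have hsplit := card_filter_add_card_filter_not (s := univ)
    fun a : Fin (m + 1) => IsLeast (π.part a : Set (Fin (m + 1))) a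
  rw [card_univ, Fintype.card_fin, ← card_parts_eq_card_filter_isLeast, hnotLeast] at hsplit
  omega

end Counting

theorem kreweras_card_classes_general (n : ℕ) (hn : 1 ≤ n)
    (π σ : Finpartition (Finset.univ : Finset (Fin n)))
    (hπ : IsNoncrossing π)
    (hun : InterlacedNoncrossing π σ)
    (hmax : ∀ σ' : Finpartition (Finset.univ : Finset (Fin n)),
      IsNoncrossing σ' → InterlacedNoncrossing π σ' → Refines σ' σ) :
    σ.parts.card = n - π.parts.card + 1 := by
  obtain ⟨m, rfl⟩ : ∃ m, n = m + 1 := ⟨n - 1, by omega⟩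
  have hσ : σ = kreweras π :=
    le_antisymm hun.le_kreweras
      (hmax _ (isNoncrossing_kreweras π) hπ.interlacedNoncrossing_kreweras)
  have hcard := hπ.card_kreweras_parts_add_card_parts
  have hπn : #π.parts ≤ m + 1 := by simpa using π.card_parts_le_card
  rw [hσ]
  omega

/-- If a noncrossing partition `π` of an `n`-element totally ordered set has `j`
classes, then its Kreweras complement (the biggest noncrossing partition `σ` of the
barred copy such that `π ∪ σ` is noncrossing on the interlaced set) has exactly
`n - j + 1` classes. -/
theorem kreweras_card_classes (n : ℕ) (hn : 1 ≤ n)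
    (π σ : Finpartition (Finset.univ : Finset (Fin n)))
    (hπ : IsNoncrossing π) (hσ : IsNoncrossing σ)
    (hun : InterlacedNoncrossing π σ)
    (hmax : ∀ σ' : Finpartition (Finset.univ : Finset (Fin n)),
      IsNoncrossing σ' → InterlacedNoncrossing π σ' → Refines σ' σ) :
    σ.parts.card = n - π.parts.card + 1 :=
  kreweras_card_classes_general n hn π σ hπ hun hmax
end

section
/- Let π be a noncrossing partition of a totally ordered finite set S such that every class of π has at least two elements. Then some class of π contains two cyclically adjacent elements of S (where the first and last elements of S are considered adjacent). -/
/-- If every class of a noncrossing partition of a (nonempty) totally ordered finite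
set has at least two elements, then some class contains two cyclically adjacent
elements (the cyclic successor of `i` in `Fin (n+1)` being `i + 1`, which wraps the
last element to the first). -/
theorem noncrossing_exists_adjacent (n : ℕ)
    (π : Finpartition (Finset.univ : Finset (Fin (n + 1))))
    (hnc : IsNoncrossing π) (h2 : ∀ B ∈ π.parts, 2 ≤ B.card) :
    ∃ B ∈ π.parts, ∃ i : Fin (n + 1), i ∈ B ∧ i + 1 ∈ B := by
  -- The set of gaps between two elements of the same part.
  set Pred : ℕ → Prop := fun d =>
    ∃ B ∈ π.parts, ∃ p q : Fin (n + 1), p ∈ B ∧ q ∈ B ∧ p < q ∧ q.val - p.val = d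
    with hPred
  have hex : ∃ d, Pred d := by
    obtain ⟨B, hB, h0⟩ := π.exists_mem (Finset.mem_univ (0 : Fin (n + 1)))
    obtain ⟨q, hq, hq0⟩ : ∃ q ∈ B, q ≠ (0 : Fin (n + 1)) := by
      have := h2 B hB
      obtain ⟨a, ha, b, hb, hab⟩ := Finset.one_lt_card.mp this
      rcases eq_or_ne a 0 with rfl | hA
      · exact ⟨b, hb, fun h => hab h.symm⟩
      · exact ⟨a, ha, hA⟩
    have hq0' : (0 : Fin (n+1)) < q := by
      refine lt_of_le_of_ne (Fin.zero_le q) (Ne.symm hq0)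
    exact ⟨q.val, B, hB, 0, q, h0, hq, hq0', by simp⟩
  classical
  set d := Nat.find hex with hd
  obtain ⟨B, hB, p, q, hp, hq, hpq, hdiff⟩ := Nat.find_spec hex
  have hd1 : 1 ≤ d := by
    have h := Fin.lt_def.mp hpq
    omega
  have hd1' : d = 1 := by
    by_contra hne
    have hd2 : 2 ≤ d := by omega
    -- the element p+1 strictly between p and q
    have hpqv : p.val < q.val := hpq
    have hqd : q.val = p.val + d := by omega
    have hm : p.val + 1 < n + 1 := by omega
    set m : Fin (n + 1) := ⟨p.val + 1, hm⟩ with hm'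
    obtain ⟨C, hC, hmC⟩ := π.exists_mem (Finset.mem_univ m)
    have hCB : C ≠ B := by
      rintro rfl
      have : Pred 1 := ⟨C, hC, p, m, hp, hmC, by simp [Fin.lt_def, hm'], by simp [hm']⟩
      have := Nat.find_le (h := hex) this
      omega
    obtain ⟨r, hr, hrm⟩ : ∃ r ∈ C, r ≠ m := by
      obtain ⟨a, ha, b, hb, hab⟩ := Finset.one_lt_card.mp (h2 C hC)
      rcases eq_or_ne a m with rfl | hA
      · exact ⟨b, hb, fun h => hab h.symm⟩
      · exact ⟨a, ha, hA⟩
    have hrp : r ≠ p := by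
      rintro rfl
      exact hCB (π.eq_of_mem_parts hC hB hr hp)
    have hrq : r ≠ q := by
      rintro rfl
      exact hCB (π.eq_of_mem_parts hC hB hr hq)
    rcases lt_trichotomy r.val p.val with h1 | h1 | h1
    · -- r < p < m < q, crossing
      exact hnc ⟨r, p, m, q, h1, by simp [hm', Fin.lt_def], by
        simp [hm', Fin.lt_def]; omega,
        C, hC, B, hB, hCB, hr, hmC, hp, hq⟩
    · exact hrp (Fin.ext h1)
    · rcases lt_trichotomy r.val q.val with h2' | h2' | h2'
      · -- p < r < q, r ≠ m so m < r; smaller gap in C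
        have hmr : m.val < r.val := by
          have : r.val ≠ p.val + 1 := fun h => hrm (Fin.ext (by simp [hm', h]))
          simp [hm']; omega
        have : Pred (r.val - m.val) :=
          ⟨C, hC, m, r, hmC, hr, Fin.lt_def.mpr hmr, rfl⟩
        have hle := Nat.find_le (h := hex) this
        have hmv : m.val = p.val + 1 := rfl
        omega
      · exact hrq (Fin.ext h2')
      · -- p < m < q < r, crossing
        exact hnc ⟨p, m, q, r, by simp [hm', Fin.lt_def], by
          simp [hm', Fin.lt_def]; omega, Fin.lt_def.mpr h2',
          B, hB, C, hC, (Ne.symm hCB), hp, hq, hmC, hr⟩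
  -- now d = 1, so q = p + 1
  refine ⟨B, hB, p, hp, ?_⟩
  have hpqv := Fin.lt_def.mp hpq
  have : q = p + 1 := by
    have : q.val = p.val + 1 := by omega
    apply Fin.ext
    rw [this]
    have : p.val + 1 < n + 1 := by omega
    simp [Fin.add_def, Nat.mod_eq_of_lt this]
  rwa [← this]
end
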